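/- arXiv:math/0307028 — 10 statements merged into one kernel-verified Lean document; each statement's English description precedes it below -/
import Mathlib

section
/- Let n > 3 be odd and m admissible. The loop L_n(m) is commutative (x·y = y·x for all x, y ∈ L_n(m)) if and only if 2m ≡ 1 (mod n), i.e. m = (n + 1)/2. Moreover m = (n + 1)/2 is admissible, so the class L_n contains exactly one commutative loop. -/
/-! For distinct `i, j ∈ Z_n` the products `i·j` and `j·i` differ by `(2m - 1)(j - i)`, so
`L_n(m)` is commutative iff `2m = 1` in `Z_n`; for `m < n` with `n` odd this forces
`2m = n + 1`. Writing `n = 2k + 1`, admissibility of `k + 1` comes from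
`2(k + 1) - n = 1 = n - 2k`. -/

/-- `m` is admissible for `n`: `0 < m < n`, `gcd(m, n) = 1` and `gcd(m - 1, n) = 1`. -/
def LAdmissible (n m : ℕ) : Prop :=
  0 < m ∧ m < n ∧ Nat.gcd m n = 1 ∧ Nat.gcd (m - 1) n = 1

/-- The product of the loop `L_n(m)`: the carrier is `Option (ZMod n)`, with `none`
playing the role of the identity `e` and `some i` the element `i ∈ Z_n`.
`e·x = x·e = x`, `i·i = e`, and for `i ≠ j`, `i·j = m·j - (m-1)·i (mod n)`. -/
def lmul (n m : ℕ) : Option (ZMod n) → Option (ZMod n) → Option (ZMod n)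
  | none, x => x
  | some i, none => some i
  | some i, some j =>
      if i = j then none
      else some ((m : ZMod n) * j - ((m : ZMod n) - 1) * i)

theorem affine_comm_iff_two_mul_eq_one {R : Type*} [CommRing R] (a : R) :
    (∀ i j : R, i ≠ j → a * j - (a - 1) * i = a * i - (a - 1) * j) ↔ 2 * a = 1 := by
  constructor
  · intro h
    rcases subsingleton_or_nontrivial R with _ | _
    · exact Subsingleton.elim _ _
    · linear_combination h 0 1 zero_ne_one
  · intro h i j _
    linear_combination (j - i) * h

theorem lmul_comm_iff (n m : ℕ) :
    (∀ x y : Option (ZMod n), lmul n m x y = lmul n m y x) ↔ 2 * m ≡ 1 [MOD n] := by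
  rw [← ZMod.natCast_eq_natCast_iff, Nat.cast_mul, Nat.cast_ofNat, Nat.cast_one,
    ← affine_comm_iff_two_mul_eq_one]
  constructor
  · intro h i j hij
    simpa [lmul, hij, Ne.symm hij] using h (some i) (some j)
  · rintro h (_ | i) (_ | j)
    any_goals rfl
    by_cases hij : i = j
    · simp [lmul, hij]
    · simp [lmul, hij, Ne.symm hij, h i j hij]

theorem two_mul_modEq_one_iff {n m : ℕ} (hn : 1 < n) (hodd : Odd n) (hm : m < n) :
    2 * m ≡ 1 [MOD n] ↔ m = (n + 1) / 2 := by
  obtain ⟨k, hk⟩ := hodd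
  rw [Nat.ModEq, Nat.mod_eq_of_lt hn]
  by_cases h : 2 * m < n
  · rw [Nat.mod_eq_of_lt h]
    constructor <;> intro <;> omega
  · rw [Nat.mod_eq_sub_mod (by omega), Nat.mod_eq_of_lt (by omega)]
    constructor <;> intro <;> omega

theorem lAdmissible_half_succ {n : ℕ} (hn : 1 < n) (hodd : Odd n) :
    LAdmissible n ((n + 1) / 2) := by
  obtain ⟨k, rfl⟩ := hodd
  have hhalf : (2 * k + 1 + 1) / 2 = k + 1 := by omega
  rw [hhalf]
  refine ⟨k.succ_pos, by omega, ?_, ?_⟩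
  · exact Nat.isCoprime_iff_coprime.mp ⟨2, -1, by push_cast; ring⟩
  · exact Nat.isCoprime_iff_coprime.mp ⟨-2, 1, by push_cast; ring⟩

/-- `L_n(m)` is commutative iff `2m ≡ 1 (mod n)`, iff `m = (n+1)/2`;
moreover `(n+1)/2` is admissible, so `L_n` contains exactly one commutative loop. -/
theorem stmt1 (n : ℕ) (hn : 3 < n) (hodd : Odd n) :
    (∀ m : ℕ, LAdmissible n m →
        ((∀ x y : Option (ZMod n), lmul n m x y = lmul n m y x) ↔ 2 * m ≡ 1 [MOD n])
          ∧ ((2 * m ≡ 1 [MOD n]) ↔ m = (n + 1) / 2))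
      ∧ LAdmissible n ((n + 1) / 2) :=
  ⟨fun m hm => ⟨lmul_comm_iff n m, two_mul_modEq_one_iff (by omega) hodd hm.2.1⟩,
    lAdmissible_half_succ (by omega) hodd⟩
end

section
/- Let n > 3 be odd with prime factorization n = p_1^{α_1} p_2^{α_2} ⋯ p_k^{α_k}. The number of admissible m for which L_n(m) is strictly non-commutative — i.e. x·y ≠ y·x for every pair of distinct non-identity elements x, y of L_n(m) — equals F_n = ∏_{i=1}^{k} (p_i − 3) p_i^{α_i − 1}. -/
/-!
For distinct `i, j ∈ Z_n` one has `i·j - j·i = (2m - 1)(j - i)`, so `L_n(m)` is strictly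
non-commutative iff `2m - 1` is a non-zero-divisor, i.e. a unit, of `Z_n`. The count is thus the
number of `a ∈ Z_n` for which `a`, `a - 1` and `2a - 1` are all units. By the Chinese remainder
theorem this number is multiplicative in `n`. Modulo `p ^ k` the three conditions only depend on
`a mod p`, where they exclude the three distinct residues `0, 1, 1/2`; each residue mod `p` has
`p ^ (k - 1)` lifts, leaving `(p - 3) p ^ (k - 1)` values.
-/

def IsStrictParam {R : Type*} [Ring R] (a : R) : Prop :=
  IsUnit a ∧ IsUnit (a - 1) ∧ IsUnit (2 * a - 1)

section

variable {R S : Type*} [Ring R] [Ring S]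

lemma isStrictParam_map_iff {F : Type*} [FunLike F R S] [RingHomClass F R S] (f : F)
    [IsLocalHom f] {a : R} : IsStrictParam (f a) ↔ IsStrictParam a := by
  simp only [IsStrictParam, ← map_one f, ← map_ofNat f 2, ← map_mul, ← map_sub, isUnit_map_iff]

lemma isStrictParam_prod_iff {x : R × S} :
    IsStrictParam x ↔ IsStrictParam x.1 ∧ IsStrictParam x.2 := by
  simp only [IsStrictParam, Prod.isUnit_iff, Prod.fst_sub, Prod.snd_sub, Prod.fst_mul,
    Prod.snd_mul, Prod.fst_one, Prod.snd_one, Prod.fst_ofNat, Prod.snd_ofNat]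
  tauto

lemma isStrictParam_iff_of_field {K : Type*} [Field K] [DecidableEq K] [NeZero (2 : K)] {a : K} :
    IsStrictParam a ↔ a ∉ ({0, 1, 2⁻¹} : Finset K) := by
  simp only [IsStrictParam, isUnit_iff_ne_zero, Finset.mem_insert, Finset.mem_singleton, not_or,
    sub_ne_zero, Ne, mul_comm (2 : K), mul_eq_one_iff_eq_inv₀ (two_ne_zero' K)]

end

lemma AddMonoidHom.natCard_preimage_of_surjective {G H : Type*} [AddGroup G] [AddGroup H]
    {f : G →+ H} (hf : Function.Surjective f) (s : Set H) :
    Nat.card (f ⁻¹' s) = Nat.card s * Nat.card f.ker := by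
  rw [← Nat.card_prod]
  refine Nat.card_congr
    { toFun := fun g => (⟨f g, g.2⟩, ⟨-Function.surjInv hf (f g) + g, ?_⟩)
      invFun := fun yk => ⟨Function.surjInv hf yk.1 + yk.2, ?_⟩
      left_inv := fun g => ?_
      right_inv := fun yk => ?_ }
  · simp [Function.surjInv_eq hf]
  · simp [Function.surjInv_eq hf, f.mem_ker.mp yk.2.2]
  · simp only [add_neg_cancel_left]
  · ext <;> simp [Function.surjInv_eq hf, f.mem_ker.mp yk.2.2]

noncomputable def strictParamCount (n : ℕ) : ℕ :=
  Nat.card {a : ZMod n // IsStrictParam a}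

lemma strictParamCount_one : strictParamCount 1 = 1 := by
  rw [strictParamCount, Nat.card_eq_one_iff_unique]
  exact ⟨inferInstance, ⟨⟨0, isUnit_of_subsingleton _, isUnit_of_subsingleton _,
    isUnit_of_subsingleton _⟩⟩⟩

lemma strictParamCount_mul {a b : ℕ} (h : a.Coprime b) :
    strictParamCount (a * b) = strictParamCount a * strictParamCount b := by
  let e := ZMod.chineseRemainder h
  calc strictParamCount (a * b)
      = Nat.card {x : ZMod a × ZMod b // IsStrictParam x.1 ∧ IsStrictParam x.2} :=
        Nat.card_congr <| e.toEquiv.subtypeEquiv fun x => by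
          rw [← isStrictParam_prod_iff]
          exact (isStrictParam_map_iff e).symm
    _ = strictParamCount a * strictParamCount b := by
        rw [Nat.card_congr Equiv.subtypeProdEquivProd, Nat.card_prod]; rfl

lemma ZMod.isLocalHom_castHom_pow {p k : ℕ} [NeZero p] (hk : k ≠ 0) :
    IsLocalHom (ZMod.castHom (dvd_pow_self p hk) (ZMod p)) where
  map_nonunit a ha := by
    have : NeZero (p ^ k) := ⟨pow_ne_zero k (NeZero.ne p)⟩
    rw [← ZMod.natCast_zmod_val a, map_natCast, ZMod.isUnit_iff_coprime] at ha
    rw [← ZMod.natCast_zmod_val a, ZMod.isUnit_iff_coprime]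
    exact Nat.Coprime.pow_right k ha

lemma ZMod.card_isStrictParam_prime {p : ℕ} [Fact p.Prime] (hp2 : p ≠ 2) :
    Nat.card {y : ZMod p // IsStrictParam y} = p - 3 := by
  have : NeZero (2 : ZMod p) := ⟨Ring.two_ne_zero (by rwa [ZMod.ringChar_zmod_n])⟩
  have hT : ({0, 1, 2⁻¹} : Finset (ZMod p)).card = 3 := by
    refine Finset.card_eq_three.mpr ⟨0, 1, 2⁻¹, zero_ne_one, (inv_ne_zero two_ne_zero).symm,
      fun h => ?_, rfl⟩
    have h2 : (2 : ZMod p) = 1 := inv_eq_one.mp h.symm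
    exact one_ne_zero (by linear_combination h2)
  simp only [isStrictParam_iff_of_field, Nat.card_eq_fintype_card, Fintype.card_subtype_compl,
    Fintype.card_coe, hT, ZMod.card]

lemma strictParamCount_prime_pow {p k : ℕ} (hp : p.Prime) (hp2 : p ≠ 2) (hk : k ≠ 0) :
    strictParamCount (p ^ k) = (p - 3) * p ^ (k - 1) := by
  have : Fact p.Prime := ⟨hp⟩
  have := ZMod.isLocalHom_castHom_pow (p := p) hk
  set φ := ZMod.castHom (dvd_pow_self p hk) (ZMod p)
  have hsurj : Function.Surjective φ.toAddMonoidHom := ZMod.castHom_surjective (dvd_pow_self p hk)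
  have hker : Nat.card φ.toAddMonoidHom.ker = p ^ (k - 1) := by
    have h := AddMonoidHom.natCard_preimage_of_surjective hsurj Set.univ
    rw [Set.preimage_univ, Nat.card_univ, Nat.card_univ, Nat.card_zmod, Nat.card_zmod] at h
    exact (Nat.eq_of_mul_eq_mul_left hp.pos (h ▸ mul_pow_sub_one hk p)).symm
  calc strictParamCount (p ^ k)
      = Nat.card (φ.toAddMonoidHom ⁻¹' {y | IsStrictParam y}) :=
        Nat.card_congr <| Equiv.subtypeEquivRight fun a => (isStrictParam_map_iff φ).symm
    _ = (p - 3) * p ^ (k - 1) := by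
        rw [AddMonoidHom.natCard_preimage_of_surjective hsurj, hker, Set.coe_ofPred,
          ZMod.card_isStrictParam_prime hp2]

lemma strictParamCount_of_odd {n : ℕ} (hodd : Odd n) :
    strictParamCount n = ∏ p ∈ n.primeFactors, (p - 3) * p ^ (n.factorization p - 1) := by
  rw [Nat.multiplicative_factorization _ (fun _ _ => strictParamCount_mul) strictParamCount_one
    (Nat.ne_of_odd_add (by simpa using hodd)), Nat.prod_factorization_eq_prod_primeFactors]
  refine Finset.prod_congr rfl fun p hp => ?_
  have hp2 : p ≠ 2 := by
    rintro rfl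
    exact Nat.not_even_iff_odd.mpr hodd (even_iff_two_dvd.mpr (Nat.dvd_of_mem_primeFactors hp))
  exact strictParamCount_prime_pow (Nat.prime_of_mem_primeFactors hp) hp2
    (Finsupp.mem_support_iff.mp (n.support_factorization ▸ hp))

lemma lmul_some_comm_iff {n m : ℕ} {x y : ZMod n} (hxy : x ≠ y) :
    lmul n m (some x) (some y) = lmul n m (some y) (some x) ↔
      (2 * (m : ZMod n) - 1) * (y - x) = 0 := by
  simp only [lmul, if_neg hxy, if_neg hxy.symm, Option.some.injEq]
  constructor <;> intro h <;> linear_combination h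

lemma forall_lmul_some_ne_iff_isUnit {n m : ℕ} [NeZero n] :
    (∀ x y : ZMod n, x ≠ y → lmul n m (some x) (some y) ≠ lmul n m (some y) (some x)) ↔
      IsUnit (2 * (m : ZMod n) - 1) := by
  rw [isUnit_iff_mem_nonZeroDivisors_of_finite, mem_nonZeroDivisors_iff_left]
  constructor
  · intro h z hz
    by_contra hz0
    exact h 0 z (Ne.symm hz0) ((lmul_some_comm_iff (Ne.symm hz0)).mpr (by rw [sub_zero, hz]))
  · intro h x y hxy hcomm
    exact hxy (sub_eq_zero.mp (h _ ((lmul_some_comm_iff hxy).mp hcomm))).symm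

lemma lAdmissible_iff {n m : ℕ} (hn : 1 < n) :
    LAdmissible n m ↔ m < n ∧ IsUnit (m : ZMod n) ∧ IsUnit ((m : ZMod n) - 1) := by
  have : Fact (1 < n) := ⟨hn⟩
  rcases Nat.eq_zero_or_pos m with rfl | hm
  · simp [LAdmissible]
  rw [LAdmissible, ZMod.isUnit_iff_coprime, ← Nat.cast_pred hm, ZMod.isUnit_iff_coprime]
  simp [hm, Nat.Coprime]

lemma ncard_setOf_lt_and_natCast {n : ℕ} [NeZero n] (P : ZMod n → Prop) :
    {m : ℕ | m < n ∧ P m}.ncard = Nat.card {a : ZMod n // P a} := by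
  have hval : {m : ℕ | m < n ∧ P m} = ZMod.val '' {a | P a} := by
    ext m
    constructor
    · rintro ⟨hm, hP⟩
      exact ⟨m, hP, ZMod.val_cast_of_lt hm⟩
    · rintro ⟨a, ha, rfl⟩
      exact ⟨a.val_lt, by rwa [ZMod.natCast_zmod_val]⟩
  rw [hval, Set.ncard_image_of_injective _ (ZMod.val_injective n), ← Nat.card_coe_set_eq]
  rfl

/-- The number of admissible `m` for which `L_n(m)` is strictly non-commutative
(i.e. `x·y ≠ y·x` for all distinct non-identity `x, y`) equals
`F_n = ∏ (p_i - 3) * p_i ^ (α_i - 1)`. -/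
theorem stmt2 (n : ℕ) (hn : 3 < n) (hodd : Odd n) :
    {m : ℕ | LAdmissible n m ∧
        ∀ x y : ZMod n, x ≠ y →
          lmul n m (some x) (some y) ≠ lmul n m (some y) (some x)}.ncard
      = ∏ p ∈ n.primeFactors, (p - 3) * p ^ (n.factorization p - 1) := by
  have : NeZero n := ⟨by omega⟩
  simp only [lAdmissible_iff (by omega : 1 < n), forall_lmul_some_ne_iff_isUnit, and_assoc]
  exact (ncard_setOf_lt_and_natCast IsStrictParam).trans (strictParamCount_of_odd hodd)
end

section
/- Let n > 3 be odd. Among the loops L_n(m) in the class L_n: L_n(m) is right alternative ((x·y)·y = x·(y·y) for all x, y) if and only if m = 2, and L_n(m) is left alternative ((x·x)·y = x·(x·y) for all x, y) if and only if m = n − 1. In particular the class L_n contains exactly one right alternative loop and exactly one left alternative loop, and contains no alternative loop (one that is simultaneously left and right alternative). -/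
/-- Among loops in `L_n`: `L_n(m)` is right alternative iff `m = 2`, left
alternative iff `m = n - 1`; both `2` and `n - 1` are admissible (so `L_n`
contains exactly one right alternative and one left alternative loop), and
no loop in `L_n` is alternative (both left and right alternative). -/
theorem stmt3 (n : ℕ) (hn : 3 < n) (hodd : Odd n) :
    (∀ m : ℕ, LAdmissible n m →
        ((∀ x y : Option (ZMod n),
            lmul n m (lmul n m x y) y = lmul n m x (lmul n m y y)) ↔ m = 2)
          ∧ ((∀ x y : Option (ZMod n),
            lmul n m (lmul n m x x) y = lmul n m x (lmul n m x y)) ↔ m = n - 1))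
      ∧ LAdmissible n 2 ∧ LAdmissible n (n - 1)
      ∧ ¬ ∃ m : ℕ, LAdmissible n m
          ∧ (∀ x y : Option (ZMod n),
              lmul n m (lmul n m x y) y = lmul n m x (lmul n m y y))
          ∧ (∀ x y : Option (ZMod n),
              lmul n m (lmul n m x x) y = lmul n m x (lmul n m x y)) := by
  have hn1 : 1 < n := by omega
  haveI : NeZero n := ⟨by omega⟩
  haveI : Fact (1 < n) := ⟨hn1⟩
  have hcast : ∀ a b : ℕ, a < n → b < n → ((a : ZMod n) = (b : ZMod n)) → a = b := by
    intro a b ha hb h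
    have := congrArg ZMod.val h
    rwa [ZMod.val_cast_of_lt ha, ZMod.val_cast_of_lt hb] at this
  have hkey : ∀ m : ℕ, LAdmissible n m →
      ((∀ x y : Option (ZMod n),
          lmul n m (lmul n m x y) y = lmul n m x (lmul n m y y)) ↔ m = 2)
        ∧ ((∀ x y : Option (ZMod n),
          lmul n m (lmul n m x x) y = lmul n m x (lmul n m x y)) ↔ m = n - 1) := by
    intro m hm
    obtain ⟨hm0, hmn, hg1, hg2⟩ := hm
    have lnn : ∀ x, lmul n m none x = x := fun x => rfl
    have lsn : ∀ i : ZMod n, lmul n m (some i) none = some i := fun i => rfl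
    have lss : ∀ i j : ZMod n, lmul n m (some i) (some j)
        = if i = j then none else some ((m : ZMod n) * j - ((m : ZMod n) - 1) * i) :=
      fun i j => rfl
    have hmu : IsUnit ((m : ℕ) : ZMod n) := (ZMod.isUnit_iff_coprime m n).mpr hg1
    have hm1cast : (((m - 1 : ℕ) : ZMod n)) = (m : ZMod n) - 1 := by
      push_cast [Nat.cast_sub hm0]; ring
    have hm1u : IsUnit ((m : ZMod n) - 1) := by
      rw [← hm1cast]; exact (ZMod.isUnit_iff_coprime (m - 1) n).mpr hg2
    have hmne0 : (m : ZMod n) ≠ 0 := hmu.ne_zero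
    have hmne1 : (m : ZMod n) ≠ 1 := by
      intro h
      apply hm1u.ne_zero
      rw [h]; ring
    have h01 : (0 : ZMod n) ≠ 1 := zero_ne_one
    constructor
    · constructor
      · -- right alternative → m = 2
        intro h
        have H := h (some (0 : ZMod n)) (some 1)
        rw [lss 0 1, if_neg h01, lss 1 1, if_pos rfl, lsn, lss] at H
        have hc : ((m : ZMod n) * 1 - ((m : ZMod n) - 1) * 0) ≠ 1 := by
          intro hc; apply hmne1; linear_combination hc
        rw [if_neg hc, Option.some.injEq] at H
        have hz : (m : ZMod n) * (2 - (m : ZMod n)) = 0 := by linear_combination H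
        have h2 : (2 : ZMod n) - (m : ZMod n) = 0 := (hmu.mul_right_eq_zero).mp hz
        have : ((m : ℕ) : ZMod n) = ((2 : ℕ) : ZMod n) := by
          push_cast; linear_combination -h2
        exact hcast m 2 hmn (by omega) this
      · -- m = 2 → right alternative
        intro h; subst h
        have lnn : ∀ x, lmul n 2 none x = x := fun x => rfl
        have lsn : ∀ i : ZMod n, lmul n 2 (some i) none = some i := fun i => rfl
        have lss : ∀ i j : ZMod n, lmul n 2 (some i) (some j)
            = if i = j then none
              else some (((2 : ℕ) : ZMod n) * j - (((2 : ℕ) : ZMod n) - 1) * i) :=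
          fun i j => rfl
        intro x y
        match x, y with
        | none, y => rw [lnn, lnn]
        | some i, none => rw [lsn, lsn, lnn, lsn]
        | some i, some j =>
          by_cases hij : i = j
          · subst hij
            rw [lss i i, if_pos rfl, lnn, lsn]
          · rw [lss i j, if_neg hij, lss j j, if_pos rfl, lsn, lss]
            have hkj : ((2 : ℕ) : ZMod n) * j - (((2 : ℕ) : ZMod n) - 1) * i ≠ j := by
              push_cast
              intro h; exact hij (by linear_combination -h)
            rw [if_neg hkj, Option.some.injEq]
            push_cast; ring
    · constructor
      · -- left alternative → m = n - 1
        intro h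
        have H := h (some (0 : ZMod n)) (some 1)
        rw [lss 0 0, if_pos rfl, lnn, lss 0 1, if_neg h01, lss] at H
        have hc : (0 : ZMod n) ≠ (m : ZMod n) * 1 - ((m : ZMod n) - 1) * 0 := by
          intro hc; apply hmne0; linear_combination -hc
        rw [if_neg hc, Option.some.injEq] at H
        have hfac : ((m : ZMod n) - 1) * ((m : ZMod n) + 1) = 0 := by
          linear_combination -H
        have h2 : (m : ZMod n) + 1 = 0 := (hm1u.mul_right_eq_zero).mp hfac
        have : ((m : ℕ) : ZMod n) = ((n - 1 : ℕ) : ZMod n) := by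
          rw [Nat.cast_sub (by omega), ZMod.natCast_self, Nat.cast_one]
          linear_combination h2
        exact hcast m (n - 1) hmn (by omega) this
      · -- m = n - 1 → left alternative
        intro h; subst h
        have hmval : ((n - 1 : ℕ) : ZMod n) = -1 := by
          rw [Nat.cast_sub (by omega), ZMod.natCast_self, Nat.cast_one]; ring
        intro x y
        match x, y with
        | none, y => rw [lnn, lnn, lnn]
        | some i, none =>
          rw [lsn]
          rcases lmul n (n - 1) (some i) (some i) with _ | k <;> rfl
        | some i, some j =>
          by_cases hij : i = j
          · subst hij
            rw [lss i i, if_pos rfl, lnn, lsn]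
          · rw [lss i i, if_pos rfl, lnn, lss i j, if_neg hij, lss]
            have hik : i ≠ ((n - 1 : ℕ) : ZMod n) * j - (((n - 1 : ℕ) : ZMod n) - 1) * i := by
              rw [hmval]
              intro h; exact hij (by linear_combination -h)
            rw [if_neg hik, Option.some.injEq, hmval]
            ring
  refine ⟨hkey, ?_, ?_, ?_⟩
  · exact ⟨by omega, by omega, Nat.coprime_two_left.mpr hodd, by simp⟩
  · obtain ⟨k, rfl⟩ : ∃ k, n = k + 2 := ⟨n - 2, by omega⟩
    refine ⟨by omega, by omega, ?_, ?_⟩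
    · have h1 : k + 2 - 1 = (k + 1) := by omega
      rw [h1, show k + 2 = (k + 1) + 1 from rfl, Nat.gcd_self_add_right, Nat.gcd_one_right]
    · have h1 : k + 2 - 1 - 1 = k := by omega
      rw [h1, Nat.gcd_self_add_right, Nat.gcd_comm]
      refine Nat.coprime_two_left.mpr ?_
      obtain ⟨t, ht⟩ := hodd
      exact ⟨t - 1, by omega⟩
  · rintro ⟨m, hm, hra, hla⟩
    have h2 := ((hkey m hm).1).mp hra
    have h3 := ((hkey m hm).2).mp hla
    omega
end

section
/- Let n > 3 be odd and m admissible. The loop L_n(m) is a weak inverse property (WIP) loop — that is, (x·y)·z = e implies x·(y·z) = e for all x, y, z ∈ L_n(m) — if and only if m² − m + 1 ≡ 0 (mod n). -/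
lemma lmul_none_right (n m : ℕ) (w : Option (ZMod n)) : lmul n m w none = w := by
  cases w <;> rfl

/-- `L_n(m)` is a weak inverse property loop (`(x·y)·z = e` implies
`x·(y·z) = e`) if and only if `m² - m + 1 ≡ 0 (mod n)`. -/
theorem stmt5 (n m : ℕ) (hn : 3 < n) (hodd : Odd n) (hm : LAdmissible n m) :
    (∀ x y z : Option (ZMod n),
        lmul n m (lmul n m x y) z = none → lmul n m x (lmul n m y z) = none)
      ↔ n ∣ m ^ 2 - m + 1 := by
  haveI : NeZero n := ⟨by omega⟩
  haveI : Fact (1 < n) := ⟨by omega⟩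
  obtain ⟨hm0, hmn, hg1, hg2⟩ := hm
  have hu : IsUnit ((m : ZMod n) - 1) := by
    have := (ZMod.isUnit_iff_coprime (m - 1) n).mpr hg2
    rwa [Nat.cast_sub hm0, Nat.cast_one] at this
  have hM1 : (m : ZMod n) - 1 ≠ 0 := hu.ne_zero
  have hcast : ((m ^ 2 - m + 1 : ℕ) : ZMod n) = (m : ZMod n) ^ 2 - m + 1 := by
    have hmm : m ≤ m ^ 2 := by nlinarith
    push_cast [Nat.cast_sub hmm]
    ring
  have hdvd : n ∣ m ^ 2 - m + 1 ↔ (m : ZMod n) ^ 2 - m + 1 = 0 := by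
    rw [← hcast, ZMod.natCast_eq_zero_iff]
  rw [hdvd]
  constructor
  · intro hw
    have h10 : (1 : ZMod n) ≠ 0 := one_ne_zero
    have hMne1 : (0 : ZMod n) ≠ 1 - m := by
      intro h; apply hM1; linear_combination h
    have e1 : lmul n m (some 1) (some 0) = some (1 - (m : ZMod n)) := by
      simp only [lmul, if_neg h10]; congr 1; ring
    have e2 : lmul n m (some (1 - (m : ZMod n))) (some (1 - (m : ZMod n))) = none := by
      simp [lmul]
    have key := hw (some 1) (some 0) (some (1 - (m : ZMod n))) (by rw [e1, e2])
    have e3 : lmul n m (some (0 : ZMod n)) (some (1 - (m : ZMod n)))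
        = some ((m : ZMod n) - (m : ZMod n) ^ 2) := by
      simp only [lmul, if_neg hMne1]; congr 1; ring
    rw [e3] at key
    simp only [lmul] at key
    by_cases h : (1 : ZMod n) = (m : ZMod n) - (m : ZMod n) ^ 2
    · linear_combination h
    · rw [if_neg h] at key; exact absurd key (by simp)
  · intro hz x y z hxyz
    rcases x with _ | i
    · exact hxyz
    rcases y with _ | j
    · exact hxyz
    rcases z with _ | k
    · rw [lmul_none_right] at hxyz
      rw [lmul_none_right]
      exact hxyz
    by_cases hij : i = j
    · subst hij
      simp [lmul] at hxyz
    · have hij' : lmul n m (some i) (some j)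
          = some ((m : ZMod n) * j - ((m : ZMod n) - 1) * i) := by
        simp only [lmul, if_neg hij]
      rw [hij'] at hxyz
      simp only [lmul] at hxyz
      by_cases hpk : (m : ZMod n) * j - ((m : ZMod n) - 1) * i = k
      · have hjk : j ≠ k := by
          intro h
          apply hij
          have h0 : ((m : ZMod n) - 1) * (j - i) = 0 := by
            rw [← h] at hpk; linear_combination hpk
          have := (hu.mul_right_eq_zero).mp h0
          exact (sub_eq_zero.mp this).symm
        have hiq : i = (m : ZMod n) * k - ((m : ZMod n) - 1) * j := by
          linear_combination (i - j) * hz + (m : ZMod n) * hpk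
        simp [lmul, if_neg hjk, ← hiq]
      · rw [if_neg hpk] at hxyz
        exact absurd hxyz (by simp)
end

section
/- Let n > 3 be odd, m admissible, and t a divisor of n with k = n/t. For each i with 1 ≤ i ≤ t, the set H_i(t) = {e, i, i + t, i + 2t, …, i + (k − 1)t} (residues mod n) is a subloop of L_n(m) of order k + 1. Moreover H_i(t) ∩ H_j(t) = {e} whenever i ≠ j, and L_n(m) = ⋃_{i=1}^{t} H_i(t). -/
/-- For `1 ≤ i ≤ t`, the subset `H_i(t) = {e, i, i+t, i+2t, …, i+(k-1)t}` of
`L_n(m)`, where `k = n / t`. -/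
def Hsub (n t i k : ℕ) : Set (Option (ZMod n)) :=
  {x | x = none ∨ ∃ l : ℕ, l < k ∧ x = some ((i + l * t : ℕ) : ZMod n)}

lemma mem_Hsub_some_iff (n t i k : ℕ) (hk : 0 < k) (hkt : k * t = n) (x : ZMod n) :
    some x ∈ Hsub n t i k ↔ ∃ l : ℕ, x = ((i + l * t : ℕ) : ZMod n) := by
  constructor
  · rintro (h | ⟨l, _, h⟩)
    · exact absurd h (by simp)
    · exact ⟨l, by simpa using h⟩
  · rintro ⟨l, rfl⟩
    refine Or.inr ⟨l % k, Nat.mod_lt _ hk, ?_⟩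
    have hmod : (i + l % k * t) ≡ (i + l * t) [MOD n] := by
      refine Nat.ModEq.add_left i ?_
      have h := (Nat.mod_modEq l k).mul_right' (c := t)
      rwa [hkt] at h
    simp [(ZMod.natCast_eq_natCast_iff _ _ _).2 hmod.symm]

/-- For each divisor `t` of `n` with `k = n/t` and each `1 ≤ i ≤ t`, the set
`H_i(t)` is a subloop of `L_n(m)` of order `k + 1`; distinct `H_i(t)`, `H_j(t)`
meet only in `{e}`, and their union over `i = 1, …, t` is all of `L_n(m)`. -/
theorem stmt7 (n m t k : ℕ) (hn : 3 < n) (hodd : Odd n) (hm : LAdmissible n m)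
    (ht : t ∣ n) (hk : k = n / t) :
    (∀ i : ℕ, 1 ≤ i → i ≤ t →
        (∀ x ∈ Hsub n t i k, ∀ y ∈ Hsub n t i k, lmul n m x y ∈ Hsub n t i k)
          ∧ (Hsub n t i k).ncard = k + 1)
      ∧ (∀ i j : ℕ, 1 ≤ i → i ≤ t → 1 ≤ j → j ≤ t → i ≠ j →
          Hsub n t i k ∩ Hsub n t j k = {none})
      ∧ (⋃ i ∈ Set.Icc 1 t, Hsub n t i k) = Set.univ := by
  have hn0 : 0 < n := by omega
  haveI : NeZero n := ⟨by omega⟩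
  have ht0 : 0 < t := Nat.pos_of_dvd_of_pos ht hn0
  have hk0 : 0 < k := by
    subst hk; exact Nat.div_pos (Nat.le_of_dvd hn0 ht) ht0
  have hkt : k * t = n := by
    subst hk; exact Nat.div_mul_cancel ht
  refine ⟨fun i hi1 hit => ⟨?_, ?_⟩, ?_, ?_⟩
  · -- closure
    rintro x hx y hy
    match x, hx, y, hy with
    | none, _, y, hy => simpa [lmul] using hy
    | some u, hu, none, _ => simpa [lmul] using hu
    | some u, hu, some v, hv =>
      rcases hu with h | ⟨a, _, ha⟩
      · simp at h
      rcases hv with h | ⟨b, _, hb⟩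
      · simp at h
      simp only [Option.some.injEq] at ha hb
      subst ha hb
      simp only [lmul]
      split
      · exact Or.inl rfl
      · rw [mem_Hsub_some_iff n t i k hk0 hkt]
        refine ⟨((m : ZMod n) * b - ((m : ZMod n) - 1) * a).val, ?_⟩
        push_cast
        rw [ZMod.natCast_val, ZMod.cast_id]
        ring
  · -- cardinality
    have heq : Hsub n t i k =
        insert none ((fun l : ℕ => (some ((i + l * t : ℕ) : ZMod n) :
          Option (ZMod n))) '' Set.Iio k) := by
      ext x
      simp only [Hsub, Set.mem_setOf_eq, Set.mem_insert_iff, Set.mem_image, Set.mem_Iio]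
      constructor
      · rintro (h | ⟨l, hl, h⟩)
        · exact Or.inl h
        · exact Or.inr ⟨l, hl, h.symm⟩
      · rintro (h | ⟨l, hl, h⟩)
        · exact Or.inl h
        · exact Or.inr ⟨l, hl, h.symm⟩
    have hinj : Set.InjOn (fun l : ℕ => (some ((i + l * t : ℕ) : ZMod n) :
        Option (ZMod n))) (Set.Iio k) := by
      intro a ha b hb hab
      simp only [Option.some.injEq] at hab
      have := (ZMod.natCast_eq_natCast_iff _ _ _).1 hab
      have h2 : a * t ≡ b * t [MOD k * t] := by
        have h := this.add_left_cancel' i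
        rwa [← hkt] at h
      have h3 : a ≡ b [MOD k] := h2.mul_right_cancel' (by omega)
      exact Nat.ModEq.eq_of_lt_of_lt h3 ha hb
    rw [heq, Set.ncard_insert_of_notMem (by simp)
      (((Set.finite_Iio k).image _))]
    rw [Set.ncard_image_of_injOn hinj]
    simp [← Finset.coe_Iio, Set.ncard_coe_finset]
  · -- intersection
    intro i j hi1 hit hj1 hjt hij
    ext x
    simp only [Set.mem_inter_iff, Set.mem_singleton_iff]
    constructor
    · rintro ⟨hxi, hxj⟩
      rcases hxi with h | ⟨a, _, ha⟩
      · exact h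
      rcases hxj with h | ⟨b, _, hb⟩
      · exact h
      exfalso
      rw [ha] at hb
      simp only [Option.some.injEq] at hb
      have hmod := (ZMod.natCast_eq_natCast_iff _ _ _).1 hb
      have hmt : (i + a * t) ≡ (j + b * t) [MOD t] := hmod.of_dvd ht
      have h1 : (i + a * t) % t = i % t := Nat.add_mul_mod_self_right i a t
      have h2 : (j + b * t) % t = j % t := Nat.add_mul_mod_self_right j b t
      have hmm : i % t = j % t := by unfold Nat.ModEq at hmt; omega
      have hi' : (i < t ∧ i % t = i) ∨ (i = t ∧ i % t = 0) := by
        rcases Nat.lt_or_ge i t with h | h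
        · exact Or.inl ⟨h, Nat.mod_eq_of_lt h⟩
        · have hh : i = t := by omega
          exact Or.inr ⟨hh, by rw [hh, Nat.mod_self]⟩
      have hj' : (j < t ∧ j % t = j) ∨ (j = t ∧ j % t = 0) := by
        rcases Nat.lt_or_ge j t with h | h
        · exact Or.inl ⟨h, Nat.mod_eq_of_lt h⟩
        · have hh : j = t := by omega
          exact Or.inr ⟨hh, by rw [hh, Nat.mod_self]⟩
      omega
    · rintro rfl
      exact ⟨Or.inl rfl, Or.inl rfl⟩
  · -- union
    ext x
    simp only [Set.mem_iUnion, Set.mem_Icc, Set.mem_univ, iff_true]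
    match x with
    | none => exact ⟨1, ⟨le_refl 1, ht0⟩, Or.inl rfl⟩
    | some c =>
      have hcv : ((c.val : ℕ) : ZMod n) = c := by
        simp [ZMod.natCast_val, ZMod.cast_id]
      by_cases hr : c.val % t = 0
      · refine ⟨t, ⟨ht0, le_refl t⟩, ?_⟩
        rw [mem_Hsub_some_iff n t t k hk0 hkt]
        rcases Nat.eq_zero_or_pos c.val with h0 | hpos
        · refine ⟨k - 1, ?_⟩
          have hsub := Nat.sub_mul k 1 t
          have htn : t ≤ n := Nat.le_of_dvd hn0 ht
          have heqn : (t + (k - 1) * t) = n := by omega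
          rw [heqn, ← hcv, h0]
          simp
        · have hle : t ≤ c.val := Nat.le_of_dvd hpos (Nat.dvd_of_mod_eq_zero hr)
          refine ⟨c.val / t - 1, ?_⟩
          have heqc : t + (c.val / t - 1) * t = c.val := by
            have h := Nat.div_mul_cancel (Nat.dvd_of_mod_eq_zero hr)
            have htle : 1 ≤ c.val / t := by
              rw [Nat.le_div_iff_mul_le ht0]; omega
            have hsub := Nat.sub_mul (c.val / t) 1 t
            omega
          rw [heqc, hcv]
      · refine ⟨c.val % t, ⟨by omega, le_of_lt (Nat.mod_lt _ ht0)⟩, ?_⟩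
        rw [mem_Hsub_some_iff n t _ k hk0 hkt]
        refine ⟨c.val / t, ?_⟩
        rw [Nat.mod_add_div' c.val t, hcv]
end

section
/- Let n > 3 be odd and m admissible. Every subloop of L_n(m) has order dividing n + 1 (the order of L_n(m)) if and only if n is prime; that is, Lagrange's theorem for groups is satisfied by every subloop of L_n(m) exactly when n is an odd prime. -/
/-- In a composite `n > 3` there is a nontrivial divisor `d` with `d+1 ∤ n+1`. -/
lemma exists_bad_divisor {n : ℕ} (hn : 3 < n) (hnp : ¬ n.Prime) :
    ∃ d, d ∣ n ∧ 1 < d ∧ d < n ∧ ¬ (d + 1 ∣ n + 1) := by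
  obtain ⟨d, hdvd, hd2, hdlt⟩ := Nat.exists_dvd_of_not_prime2 (by omega) hnp
  by_cases h : (d + 1) ∣ (n + 1)
  · obtain ⟨e, he⟩ := hdvd
    have he2 : 1 < e := by
      rcases Nat.lt_or_ge e 2 with h' | h' <;> [skip; omega]
      interval_cases e <;> omega
    have hed : e ∣ n := ⟨d, by rw [he, Nat.mul_comm]⟩
    have heq : n / d = e := by rw [he]; exact Nat.mul_div_cancel_left e (by omega)
    -- from h : d+1 ∣ n+1 = d*e+1 we get d+1 ∣ e-1
    have h1 : (d + 1) ∣ (e - 1) := by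
      have hA : (d + 1) ∣ (d * e + e) := ⟨e, by ring⟩
      have := Nat.dvd_sub hA (he ▸ h)
      simpa [Nat.add_sub_add_left, show d * e + e - (d * e + 1) = e - 1 by omega] using this
    have hle : d + 1 ≤ e - 1 := Nat.le_of_dvd (by omega) h1
    refine ⟨e, hed, he2, by nlinarith, ?_⟩
    intro h2
    have h3 : (e + 1) ∣ (d - 1) := by
      have hA : (e + 1) ∣ (e * d + d) := ⟨d, by ring⟩
      have hB : (e + 1) ∣ (e * d + 1) := by rwa [show e * d = d * e by ring, ← he]
      have := Nat.dvd_sub hA hB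
      simpa [show e * d + d - (e * d + 1) = d - 1 by omega] using this
    have := Nat.le_of_dvd (by omega) h3
    omega
  · exact ⟨d, hdvd, hd2, hdlt, h⟩

/-- A subset of `ZMod p` (`p` prime) containing two distinct elements and closed
under `(i, j) ↦ μ j - (μ - 1) i` with `μ ≠ 0, 1` is everything. -/
lemma key_univ {p : ℕ} (hp : p.Prime) (μ : ZMod p) (hμ : μ ≠ 0) (hμ1 : μ ≠ 1)
    (S : Set (ZMod p)) (hcl : ∀ i ∈ S, ∀ j ∈ S, μ * j - (μ - 1) * i ∈ S)
    {a b : ZMod p} (ha : a ∈ S) (hb : b ∈ S) (hab : a ≠ b) : S = Set.univ := by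
  haveI : Fact p.Prime := ⟨hp⟩
  haveI : NeZero p := ⟨hp.pos.ne'⟩
  set T : Set (ZMod p) := (fun x => x - a) '' S with hT
  have hmem : ∀ x, x ∈ T ↔ x + a ∈ S := by
    intro x
    constructor
    · rintro ⟨s, hs, rfl⟩; simpa using hs
    · intro h; exact ⟨x + a, h, by ring⟩
  have h0 : (0 : ZMod p) ∈ T := (hmem 0).2 (by simpa using ha)
  have hclT : ∀ x ∈ T, ∀ y ∈ T, μ * y - (μ - 1) * x ∈ T := by
    intro x hx y hy
    rw [hmem] at hx hy ⊢
    have h := hcl _ hx _ hy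
    have : μ * (y + a) - (μ - 1) * (x + a) = μ * y - (μ - 1) * x + a := by ring
    rwa [this] at h
  have hm1 : ∀ y ∈ T, μ * y ∈ T := by
    intro y hy; simpa using hclT 0 h0 y hy
  have hm2 : ∀ x ∈ T, (1 - μ) * x ∈ T := by
    intro x hx
    have h := hclT x hx 0 h0
    have : μ * 0 - (μ - 1) * x = (1 - μ) * x := by ring
    rwa [this] at h
  have hsurj : ∀ (c : ZMod p), c ≠ 0 → (∀ x ∈ T, c * x ∈ T) →
      ∀ y ∈ T, ∃ x ∈ T, c * x = y := by
    intro c hc hmaps y hy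
    have himg : (fun x => c * x) '' T = T := by
      apply Set.eq_of_subset_of_ncard_le ?_ ?_ (Set.toFinite _)
      · rintro _ ⟨x, hx, rfl⟩; exact hmaps x hx
      · rw [Set.ncard_image_of_injective _ (mul_right_injective₀ hc)]
    rw [← himg] at hy
    obtain ⟨x, hx, hxy⟩ := hy
    exact ⟨x, hx, hxy⟩
  have hν : (1 : ZMod p) - μ ≠ 0 := sub_ne_zero.2 (Ne.symm hμ1)
  have hadd : ∀ x ∈ T, ∀ y ∈ T, x + y ∈ T := by
    intro x hx y hy
    obtain ⟨x', hx', hxe⟩ := hsurj (1 - μ) hν hm2 x hx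
    obtain ⟨y', hy', hye⟩ := hsurj μ hμ hm1 y hy
    have h := hclT x' hx' y' hy'
    have : μ * y' - (μ - 1) * x' = μ * y' + (1 - μ) * x' := by ring
    rw [this, hxe, hye, add_comm] at h
    exact h
  set t := b - a with htdef
  have ht : t ∈ T := ⟨b, hb, rfl⟩
  have htne : t ≠ 0 := sub_ne_zero.2 (Ne.symm hab)
  have hns : ∀ k : ℕ, (k : ZMod p) * t ∈ T := by
    intro k
    induction k with
    | zero => simpa using h0
    | succ k ih =>
        have h := hadd _ ih _ ht
        have : ((k + 1 : ℕ) : ZMod p) * t = (k : ZMod p) * t + t := by push_cast; ring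
        rwa [this]
  have hTuniv : ∀ z : ZMod p, z ∈ T := by
    intro z
    have h := hns (z * t⁻¹).val
    rwa [ZMod.natCast_zmod_val, mul_assoc, inv_mul_cancel₀ htne, mul_one] at h
  ext z
  simp only [Set.mem_univ, iff_true]
  have h := (hmem (z - a)).1 (hTuniv (z - a))
  simpa using h

/-- Cardinality of the kernel of the reduction `ZMod n → ZMod c` for `c ∣ n`. -/
lemma card_ker {n c : ℕ} [NeZero n] (hc : c ∣ n) (hcpos : 0 < c) :
    {x : ZMod n | (ZMod.castHom hc (ZMod c)) x = 0}.ncard = n / c := by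
  haveI : NeZero c := ⟨by omega⟩
  set φ := ZMod.castHom hc (ZMod c) with hφ
  have hsurj : Function.Surjective φ := by
    intro y
    exact ⟨(y.val : ZMod n), by rw [map_natCast, ZMod.natCast_zmod_val]⟩
  set K := AddMonoidHom.ker φ.toAddMonoidHom with hK
  have hKset : {x : ZMod n | φ x = 0} = (K : Set (ZMod n)) := by
    ext x; simp [hK, AddMonoidHom.mem_ker]
  have hquot : Nat.card (ZMod n ⧸ K) = c := by
    rw [Nat.card_congr (QuotientAddGroup.quotientKerEquivOfSurjective
      φ.toAddMonoidHom hsurj).toEquiv]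
    simp [Nat.card_eq_fintype_card, ZMod.card]
  have hmain : Nat.card (ZMod n) = Nat.card (ZMod n ⧸ K) * Nat.card K :=
    AddSubgroup.card_eq_card_quotient_mul_card_addSubgroup K
  rw [Nat.card_eq_fintype_card, ZMod.card, hquot] at hmain
  rw [hKset, ← Nat.card_coe_set_eq]
  have h2 : Nat.card (K : Set (ZMod n)) = Nat.card K := rfl
  rw [h2]
  exact (Nat.div_eq_of_eq_mul_left hcpos (hmain.trans (Nat.mul_comm _ _))).symm

/-- Every subloop of `L_n(m)` has order dividing `n + 1 = |L_n(m)|` if and only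
if `n` is prime: Lagrange's theorem holds for all subloops exactly when `n` is
an odd prime. -/
theorem stmt9 (n m : ℕ) (hn : 3 < n) (hodd : Odd n) (hm : LAdmissible n m) :
    (∀ H : Set (Option (ZMod n)), none ∈ H →
        (∀ x ∈ H, ∀ y ∈ H, lmul n m x y ∈ H) → H.ncard ∣ n + 1)
      ↔ n.Prime := by
  obtain ⟨hm0, hmn, hg1, hg2⟩ := hm
  haveI : NeZero n := ⟨by omega⟩
  have hm1 : 1 < m := by
    by_contra h
    have : m = 1 := by omega
    subst this
    simp [Nat.gcd] at hg2
    omega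
  have hμ0 : (m : ZMod n) ≠ 0 := by
    rw [Ne, ZMod.natCast_eq_zero_iff]
    intro h
    exact absurd (Nat.le_of_dvd hm0 h) (by omega)
  have hμ1 : (m : ZMod n) ≠ 1 := by
    intro h
    have h1 : ((m - 1 : ℕ) : ZMod n) = 0 := by
      rw [Nat.cast_sub (le_of_lt hm1), h]
      simp
    rw [ZMod.natCast_eq_zero_iff] at h1
    have := Nat.le_of_dvd (by omega) h1
    omega
  constructor
  · -- Lagrange property ⇒ prime
    intro hlag
    by_contra hnp
    obtain ⟨d, hdvd, hd1, hdn, hbad⟩ := exists_bad_divisor hn hnp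
    have hcd : n / d ∣ n := Nat.div_dvd_of_dvd hdvd
    have hcpos : 0 < n / d := Nat.div_pos (le_of_lt hdn) (by omega)
    set φ := ZMod.castHom hcd (ZMod (n / d)) with hφ
    set S : Set (ZMod n) := {x | φ x = 0} with hS
    set H : Set (Option (ZMod n)) := insert none (some '' S) with hH
    have hnone : none ∈ H := Set.mem_insert _ _
    have hmemH : ∀ i : ZMod n, some i ∈ H ↔ i ∈ S := by
      intro i; simp [hH]
    have hclosed : ∀ x ∈ H, ∀ y ∈ H, lmul n m x y ∈ H := by
      intro x hx y hy
      match x, y with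
      | none, y => simpa [lmul] using hy
      | some i, none => simpa [lmul] using hx
      | some i, some j =>
        rcases eq_or_ne i j with rfl | hij
        · simpa [lmul] using hnone
        · have hi : φ i = 0 := (hmemH i).1 hx
          have hj : φ j = 0 := (hmemH j).1 hy
          have : lmul n m (some i) (some j)
              = some ((m : ZMod n) * j - ((m : ZMod n) - 1) * i) := by
            simp [lmul, hij]
          rw [this, hmemH]
          show φ _ = 0
          simp [map_sub, map_mul, hi, hj]
    have hcard : H.ncard = n / (n / d) + 1 := by
      rw [hH, Set.ncard_insert_of_notMem (by simp),
        Set.ncard_image_of_injective _ (Option.some_injective _)]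
      congr 1
      exact card_ker hcd hcpos
    have hdd : n / (n / d) = d := Nat.div_div_self hdvd (by omega)
    rw [hdd] at hcard
    exact hbad (hcard ▸ hlag H hnone hclosed)
  · -- prime ⇒ Lagrange property
    intro hp H hnone hclosed
    set S : Set (ZMod n) := {i | some i ∈ H} with hS
    have hHeq : H = insert none (some '' S) := by
      ext x
      cases x with
      | none => simpa using hnone
      | some i => simp [hS]
    have hcard : H.ncard = S.ncard + 1 := by
      rw [hHeq, Set.ncard_insert_of_notMem (by simp),
        Set.ncard_image_of_injective _ (Option.some_injective _)]
    have hclS : ∀ i ∈ S, ∀ j ∈ S, (m : ZMod n) * j - ((m : ZMod n) - 1) * i ∈ S := by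
      intro i hi j hj
      rcases eq_or_ne i j with rfl | hij
      · have : (m : ZMod n) * i - ((m : ZMod n) - 1) * i = i := by ring
        rw [this]; exact hi
      · have h := hclosed _ hi _ hj
        simpa [lmul, hij, hS] using h
    rcases Set.eq_empty_or_nonempty S with hSe | ⟨a, ha⟩
    · rw [hcard, hSe, Set.ncard_empty]
      exact one_dvd _
    · by_cases h2 : ∃ b ∈ S, b ≠ a
      · obtain ⟨b, hb, hba⟩ := h2
        have huniv := key_univ hp _ hμ0 hμ1 S hclS ha hb (Ne.symm hba)
        rw [hcard, huniv, Set.ncard_univ, Nat.card_eq_fintype_card, ZMod.card]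
      · have hSa : S = {a} := by
          ext x
          constructor
          · intro hx
            by_contra hxa
            exact h2 ⟨x, hx, hxa⟩
          · rintro rfl; exact ha
        rw [hcard, hSa, Set.ncard_singleton]
        obtain ⟨k, hk⟩ := hodd
        exact ⟨k + 1, by omega⟩
end

section
/- Let n > 3 be an odd prime and m admissible. Then the only subloops of L_n(m) are the trivial subloop {e}, the n two-element subgroups A_i = {e, i} for i ∈ Z_n, and L_n(m) itself; in particular every proper non-trivial subloop of L_n(m) is a subgroup of order 2. -/
/-- For `n` an odd prime, the subloops of `L_n(m)` are exactly `{e}`, the `n`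
two-element subgroups `A_i = {e, i}` for `i ∈ Z_n`, and `L_n(m)` itself. -/
theorem stmt10 (n m : ℕ) (hn : 3 < n) (hodd : Odd n) (hp : n.Prime)
    (hm : LAdmissible n m) :
    ∀ H : Set (Option (ZMod n)),
      (none ∈ H ∧ ∀ x ∈ H, ∀ y ∈ H, lmul n m x y ∈ H)
        ↔ (H = {none} ∨ (∃ i : ZMod n, H = {none, some i}) ∨ H = Set.univ) := by
  intro H
  haveI : Fact n.Prime := ⟨hp⟩
  haveI : NeZero n := ⟨by omega⟩
  constructor
  · rintro ⟨hnone, hclosed⟩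
    obtain ⟨hm0, hmn, hg1, hg2⟩ := hm
    set μ : ZMod n := (m : ZMod n) with hμdef
    have hμ0 : μ ≠ 0 := by
      intro h
      have hdvd : n ∣ m := (ZMod.natCast_eq_zero_iff m n).mp h
      have : n ∣ 1 := hg1 ▸ Nat.dvd_gcd hdvd dvd_rfl
      rw [Nat.dvd_one] at this
      omega
    have hμ1 : μ ≠ 1 := by
      intro h
      have hcast : ((m - 1 : ℕ) : ZMod n) = 0 := by
        rw [Nat.cast_sub hm0]
        simp [← hμdef, h]
      have hdvd : n ∣ m - 1 := (ZMod.natCast_eq_zero_iff (m - 1) n).mp hcast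
      have : n ∣ 1 := hg2 ▸ Nat.dvd_gcd hdvd dvd_rfl
      rw [Nat.dvd_one] at this
      omega
    have h1μ0 : (1 : ZMod n) - μ ≠ 0 := sub_ne_zero.mpr (Ne.symm hμ1)
    set S : Set (ZMod n) := {x | some x ∈ H} with hSdef
    have hgS : ∀ x ∈ S, ∀ y ∈ S, (1 - μ) * x + μ * y ∈ S := by
      intro x hx y hy
      by_cases hxy : x = y
      · subst hxy
        have e : (1 - μ) * x + μ * x = x := by ring
        rw [e]; exact hx
      · have h2 := hclosed _ hx _ hy
        simp only [lmul, if_neg hxy] at h2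
        have e : (1 - μ) * x + μ * y = μ * y - (μ - 1) * x := by ring
        rw [hSdef]
        simp only [Set.mem_setOf_eq, e]
        exact h2
    set C : Set (ZMod n) := {c | ∀ x ∈ S, ∀ y ∈ S, (1 - c) * x + c * y ∈ S} with hCdef
    have h0C : (0 : ZMod n) ∈ C := by
      intro x hx y hy
      have e : (1 - (0:ZMod n)) * x + 0 * y = x := by ring
      rw [e]; exact hx
    have h1C : (1 : ZMod n) ∈ C := by
      intro x hx y hy
      have e : (1 - (1:ZMod n)) * x + 1 * y = y := by ring
      rw [e]; exact hy
    have hmulC : ∀ c ∈ C, ∀ d ∈ C, c * d ∈ C := by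
      intro c hc d hd x hx y hy
      have hz := hd x hx y hy
      have h2 := hc x hx _ hz
      have e : (1 - c * d) * x + c * d * y = (1 - c) * x + c * ((1 - d) * x + d * y) := by
        ring
      rw [e]; exact h2
    have hcomb : ∀ c ∈ C, ∀ d ∈ C, (1 - μ) * c + μ * d ∈ C := by
      intro c hc d hd x hx y hy
      have h1 := hc x hx y hy
      have h2 := hd x hx y hy
      have h3 := hgS _ h1 _ h2
      have e : (1 - ((1 - μ) * c + μ * d)) * x + ((1 - μ) * c + μ * d) * y
          = (1 - μ) * ((1 - c) * x + c * y) + μ * ((1 - d) * x + d * y) := by ring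
      rw [e]; exact h3
    have hμC : μ ∈ C := by
      have h := hcomb 0 h0C 1 h1C
      have e : (1 - μ) * 0 + μ * 1 = μ := by ring
      rwa [e] at h
    have h1μC : (1 : ZMod n) - μ ∈ C := by
      have h := hcomb 1 h1C 0 h0C
      have e : (1 - μ) * 1 + μ * 0 = 1 - μ := by ring
      rwa [e] at h
    have hpowC : ∀ c ∈ C, ∀ k : ℕ, c ^ k ∈ C := by
      intro c hc k
      induction k with
      | zero => simpa using h1C
      | succ k ih =>
        rw [pow_succ]
        exact hmulC _ ih _ hc
    have haddC : ∀ a ∈ C, ∀ b ∈ C, a + b ∈ C := by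
      intro a ha b hb
      have hu := hmulC _ (hpowC _ h1μC (n - 2)) a ha
      have hv := hmulC _ (hpowC _ hμC (n - 2)) b hb
      have h := hcomb _ hu _ hv
      have e : (1 - μ) * ((1 - μ) ^ (n - 2) * a) + μ * (μ ^ (n - 2) * b)
          = (1 - μ) ^ (n - 1) * a + μ ^ (n - 1) * b := by
        rw [show n - 1 = (n - 2) + 1 by omega]
        ring
      rw [e, ZMod.pow_card_sub_one_eq_one h1μ0, ZMod.pow_card_sub_one_eq_one hμ0,
        one_mul, one_mul] at h
      exact h
    have hnatC : ∀ k : ℕ, ((k : ℕ) : ZMod n) ∈ C := by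
      intro k
      induction k with
      | zero => simpa using h0C
      | succ k ih =>
        push_cast
        exact haddC _ ih _ h1C
    have hCuniv : ∀ c : ZMod n, c ∈ C := by
      intro c
      obtain ⟨k, rfl⟩ := ZMod.natCast_zmod_surjective c
      exact hnatC k
    by_cases h1 : ∃ x y : ZMod n, some x ∈ H ∧ some y ∈ H ∧ x ≠ y
    · right; right
      obtain ⟨x0, y0, hx0, hy0, hxy⟩ := h1
      have hd : y0 - x0 ≠ 0 := sub_ne_zero.mpr (Ne.symm hxy)
      have hSuniv : ∀ z : ZMod n, some z ∈ H := by
        intro z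
        set c : ZMod n := (z - x0) * (y0 - x0)⁻¹ with hcdef
        have hc := hCuniv c x0 hx0 y0 hy0
        have e : (1 - c) * x0 + c * y0 = z := by
          have h2 : c * (y0 - x0) = z - x0 := by
            rw [hcdef, mul_assoc, inv_mul_cancel₀ hd, mul_one]
          have h3 : (1 - c) * x0 + c * y0 = x0 + c * (y0 - x0) := by ring
          rw [h3, h2]; ring
        rw [e] at hc
        exact hc
      ext o
      simp only [Set.mem_univ, iff_true]
      cases o with
      | none => exact hnone
      | some z => exact hSuniv z
    · push_neg at h1
      by_cases h2 : ∃ x : ZMod n, some x ∈ H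
      · obtain ⟨i, hi⟩ := h2
        right; left
        refine ⟨i, ?_⟩
        ext o
        cases o with
        | none => simp [hnone]
        | some x =>
          simp only [Set.mem_insert_iff, Set.mem_singleton_iff]
          constructor
          · intro hx
            exact Or.inr (by rw [h1 x i hx hi])
          · rintro (h | h)
            · exact absurd h (by simp)
            · rw [Option.some_inj] at h
              rw [h]; exact hi
      · push_neg at h2
        left
        ext o
        cases o with
        | none => simp [hnone]
        | some x =>
          simp only [Set.mem_singleton_iff]
          constructor
          · intro hx; exact absurd hx (h2 x)
          · intro h; exact absurd h (by simp)
  · rintro (rfl | ⟨i, rfl⟩ | rfl)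
    · refine ⟨rfl, ?_⟩
      intro x hx y hy
      rw [Set.mem_singleton_iff] at hx hy
      subst hx; subst hy
      simp [lmul]
    · refine ⟨Or.inl rfl, ?_⟩
      intro x hx y hy
      rcases hx with rfl | hx
      · rcases hy with rfl | hy
        · simp [lmul]
        · rw [Set.mem_singleton_iff] at hy; subst hy; simp [lmul]
      · rw [Set.mem_singleton_iff] at hx; subst hx
        rcases hy with rfl | hy
        · simp [lmul]
        · rw [Set.mem_singleton_iff] at hy; subst hy; simp [lmul]
    · exact ⟨trivial, fun _ _ _ _ => trivial⟩
end

section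
/- Let n > 3 be an odd prime and m admissible. Then the left nucleus N_λ(L_n(m)) = {a ∈ L_n(m) : (a·x)·y = a·(x·y) for all x, y ∈ L_n(m)} equals {e}; consequently the nucleus N(L_n(m)) = N_λ ∩ N_μ ∩ N_ρ equals {e}, where N_μ and N_ρ are the middle and right nuclei defined analogously. -/
theorem lmul_self (n m : ℕ) (i : ZMod n) : lmul n m (some i) (some i) = none := by
  simp [lmul]

theorem lmul_ne (n m : ℕ) {i j : ZMod n} (h : i ≠ j) :
    lmul n m (some i) (some j) = some ((m : ZMod n) * j - ((m : ZMod n) - 1) * i) := by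
  simp [lmul, h]

/-- For `n` an odd prime, the left nucleus of `L_n(m)` is `{e}`, and hence the
nucleus `N = N_λ ∩ N_μ ∩ N_ρ` is `{e}`. -/
theorem stmt11 (n m : ℕ) (hn : 3 < n) (hodd : Odd n) (hp : n.Prime)
    (hm : LAdmissible n m) :
    {a : Option (ZMod n) | ∀ x y : Option (ZMod n),
        lmul n m (lmul n m a x) y = lmul n m a (lmul n m x y)} = {none}
      ∧ ({a : Option (ZMod n) | ∀ x y : Option (ZMod n),
            lmul n m (lmul n m a x) y = lmul n m a (lmul n m x y)}
          ∩ {a : Option (ZMod n) | ∀ x y : Option (ZMod n),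
            lmul n m (lmul n m x a) y = lmul n m x (lmul n m a y)}
          ∩ {a : Option (ZMod n) | ∀ x y : Option (ZMod n),
            lmul n m (lmul n m x y) a = lmul n m x (lmul n m y a)}) = {none} := by
  haveI := Fact.mk hp
  obtain ⟨hm0, hmn, hg1, hg2⟩ := hm
  have hndvd : ∀ k : ℕ, n ∣ k → Nat.gcd k n = 1 → False := by
    intro k hk hg
    have h' : n ∣ Nat.gcd k n := Nat.dvd_gcd hk dvd_rfl
    rw [hg] at h'
    have := Nat.le_of_dvd one_pos h'
    omega
  have hM0 : (m : ZMod n) ≠ 0 := by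
    rw [Ne, ZMod.natCast_eq_zero_iff]
    intro h; exact hndvd m h hg1
  have hM1 : (m : ZMod n) ≠ 1 := by
    intro h
    have : ((m - 1 : ℕ) : ZMod n) = 0 := by
      rw [Nat.cast_sub hm0]; simp [h]
    rw [ZMod.natCast_eq_zero_iff] at this
    exact hndvd (m - 1) this hg2
  have h2 : (2 : ZMod n) ≠ 0 := by
    have : ((2 : ℕ) : ZMod n) ≠ 0 := by
      rw [Ne, ZMod.natCast_eq_zero_iff]
      intro h; have := Nat.le_of_dvd (by norm_num) h; omega
    simpa using this
  have h3 : (3 : ZMod n) ≠ 0 := by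
    have : ((3 : ℕ) : ZMod n) ≠ 0 := by
      rw [Ne, ZMod.natCast_eq_zero_iff]
      intro h; have := Nat.le_of_dvd (by norm_num) h; omega
    simpa using this
  have key : {a : Option (ZMod n) | ∀ x y : Option (ZMod n),
      lmul n m (lmul n m a x) y = lmul n m a (lmul n m x y)} = {none} := by
    ext a
    simp only [Set.mem_setOf_eq, Set.mem_singleton_iff]
    constructor
    · intro h
      by_contra ha
      obtain ⟨i, rfl⟩ := Option.ne_none_iff_exists'.mp ha
      have hne : i ≠ i + 1 := by
        intro h'; exact one_ne_zero (by linear_combination -h')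
      by_cases hM2 : (m : ZMod n) * (m : ZMod n) = 1
      · -- then m ≡ -1
        have hMneg : (m : ZMod n) = -1 := by
          have h' : ((m : ZMod n) - 1) * ((m : ZMod n) + 1) = 0 := by linear_combination hM2
          rcases mul_eq_zero.mp h' with h' | h'
          · exact absurd (by linear_combination h') hM1
          · linear_combination h'
        have hcalc : (m : ZMod n) * (i + 1) - ((m : ZMod n) - 1) * i = i - 1 := by
          rw [hMneg]; ring
        have hne2 : i - 1 ≠ i + 1 := by
          intro h'; exact h2 (by linear_combination -h')
        have hmain := h (some (i + 1)) (some (i + 1))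
        rw [lmul_ne n m hne, hcalc, lmul_self, lmul_ne n m hne2] at hmain
        have hmain' : lmul n m (some i) none = some i := rfl
        rw [hmain'] at hmain
        rw [Option.some_inj, hMneg] at hmain
        exact h3 (by linear_combination -hmain)
      · have hcalc : (m : ZMod n) * (i + 1) - ((m : ZMod n) - 1) * i = i + (m : ZMod n) := by
          ring
        have hne2 : i ≠ i + (m : ZMod n) := by
          intro h'; exact hM0 (by linear_combination -h')
        have hcalc2 : (m : ZMod n) * (i + (m : ZMod n)) - ((m : ZMod n) - 1) * i
            = i + (m : ZMod n) * (m : ZMod n) := by ring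
        have hmain := h (some i) (some (i + 1))
        rw [lmul_self, lmul_ne n m hne, hcalc, lmul_ne n m hne2, hcalc2] at hmain
        have hmain' : lmul n m none (some (i + 1)) = some (i + 1) := rfl
        rw [hmain', Option.some_inj] at hmain
        exact hM2 (by linear_combination -hmain)
    · rintro rfl
      intro x y
      rfl
  have mul_none : ∀ x : Option (ZMod n), lmul n m x none = x := by
    intro x; cases x <;> rfl
  refine ⟨key, ?_⟩
  rw [key]
  apply Set.Subset.antisymm
  · intro a ha
    exact ha.1.1
  · intro a ha
    rw [Set.mem_singleton_iff] at ha
    subst ha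
    refine ⟨⟨rfl, ?_⟩, ?_⟩
    · intro x y; simp only [Set.mem_setOf_eq, mul_none]; rfl
    · intro x y; simp only [Set.mem_setOf_eq, mul_none]
end

section
/- Let n > 3 be an odd prime and m admissible. The Moufang centre C(L_n(m)) = {x ∈ L_n(m) : x·y = y·x for all y ∈ L_n(m)} equals all of L_n(m) if 2m ≡ 1 (mod n) (the commutative case) and equals {e} otherwise; that is, the Moufang centre of L_n(m) is either {e} or L_n(m). -/
/-- For `n` an odd prime, the Moufang centre `C(L_n(m)) = {x : x·y = y·x ∀ y}`
is all of `L_n(m)` when `2m ≡ 1 (mod n)` and is `{e}` otherwise. -/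
theorem stmt12 (n m : ℕ) (hn : 3 < n) (hodd : Odd n) (hp : n.Prime)
    (hm : LAdmissible n m) :
    ((2 * m ≡ 1 [MOD n]) →
        {x : Option (ZMod n) | ∀ y : Option (ZMod n), lmul n m x y = lmul n m y x}
          = Set.univ)
      ∧ (¬ (2 * m ≡ 1 [MOD n]) →
        {x : Option (ZMod n) | ∀ y : Option (ZMod n), lmul n m x y = lmul n m y x}
          = {none}) := by
  haveI : Fact n.Prime := ⟨hp⟩
  set M := (m : ZMod n) with hM
  have hmod : (2 * m ≡ 1 [MOD n]) ↔ 2 * M - 1 = 0 := by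
    rw [← ZMod.natCast_eq_natCast_iff, sub_eq_zero]
    push_cast
    rfl
  constructor
  · intro h
    have h0 := hmod.mp h
    ext x
    simp only [Set.mem_setOf_eq, Set.mem_univ, iff_true]
    intro y
    match x, y with
    | none, none => rfl
    | none, some j => simp [lmul]
    | some i, none => simp [lmul]
    | some i, some j =>
      by_cases hij : i = j
      · simp [lmul, hij]
      · simp only [lmul, if_neg hij, if_neg (Ne.symm hij), Option.some.injEq, ← hM]
        linear_combination (j - i) * h0
  · intro h
    have h0 : 2 * M - 1 ≠ 0 := fun hc => h (hmod.mpr hc)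
    ext x
    simp only [Set.mem_setOf_eq, Set.mem_singleton_iff]
    constructor
    · intro hx
      match x with
      | none => rfl
      | some i =>
        exfalso
        have h1 : i ≠ i + 1 := by
          intro hi
          exact one_ne_zero (left_eq_add.mp hi)
        have := hx (some (i + 1))
        simp only [lmul, if_neg h1, if_neg (Ne.symm h1), Option.some.injEq, ← hM] at this
        exact h0 (by linear_combination this)
    · rintro rfl
      intro y
      match y with
      | none => rfl
      | some j => simp [lmul]
end

section
/- Let n > 3 be an odd prime, m admissible, and let k be the least positive integer such that (m − 1)^k ≡ (−1)^k (mod n). Then for every a ∈ Z_n and every x ∈ Z_n with x ≠ a, the least positive integer j with f_a^j(x) = x equals k. Consequently k divides n − 1, and each right translation R_a of L_n(m) (a ≠ e) is the product of the 2-cycle interchanging e and a together with t = (n − 1)/k disjoint cycles of length k. -/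
/-- The affine map `f_a : Z_n → Z_n`, `f_a(x) = m·a - (m-1)·x (mod n)`, which
describes the right translation `R_a` of `L_n(m)` away from `e` and `a`. -/
def ftrans (n m : ℕ) (a x : ZMod n) : ZMod n :=
  (m : ZMod n) * a - ((m : ZMod n) - 1) * x

/-- For `n` an odd prime, if `k` is the least positive integer with
`(m-1)^k ≡ (-1)^k (mod n)`, then every `x ≠ a` has minimal period exactly `k`
under `f_a`, `k` divides `n - 1`, and `a` is a fixed point of `f_a`; so each
right translation `R_a` (`a ≠ e`) is the product of the 2-cycle `(e a)` with
`t = (n-1)/k` disjoint cycles of length `k`. -/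
theorem stmt15 (n m : ℕ) (hn : 3 < n) (hodd : Odd n) (hp : n.Prime)
    (hm : LAdmissible n m) (k : ℕ) (hk : 0 < k)
    (hcond : ((m : ZMod n) - 1) ^ k = (-1 : ZMod n) ^ k)
    (hleast : ∀ j : ℕ, 0 < j → j < k → ((m : ZMod n) - 1) ^ j ≠ (-1 : ZMod n) ^ j) :
    (∀ a x : ZMod n, x ≠ a → Function.minimalPeriod (ftrans n m a) x = k)
      ∧ k ∣ n - 1
      ∧ (∀ a : ZMod n, ftrans n m a a = a) := by
  haveI := Fact.mk hp
  obtain ⟨hm0, hmn, hg1, hg2⟩ := hm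
  set c : ZMod n := 1 - (m : ZMod n) with hc
  have hm1 : m ≠ 1 := by
    rintro rfl
    simp at hg2
    omega
  have hcne : c ≠ 0 := by
    intro h
    have h1 : (m : ZMod n) = ((1 : ℕ) : ZMod n) := by
      push_cast
      exact (sub_eq_zero.mp h).symm
    rw [ZMod.natCast_eq_natCast_iff'] at h1
    rw [Nat.mod_eq_of_lt hmn, Nat.mod_eq_of_lt (by omega)] at h1
    exact hm1 h1
  have hck : c ^ k = 1 := by
    have h1 : c = (-1) * ((m : ZMod n) - 1) := by rw [hc]; ring
    rw [h1, mul_pow, hcond, ← mul_pow]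
    norm_num
  have hclt : ∀ j, 0 < j → j < k → c ^ j ≠ 1 := by
    intro j hj hjk h
    apply hleast j hj hjk
    have h2 : ((m : ZMod n) - 1) ^ j = (-1 : ZMod n) ^ j * c ^ j := by
      rw [← mul_pow, hc]; ring_nf
    rw [h2, h, mul_one]
  have horder : orderOf c = k := by
    rw [orderOf_eq_iff hk]
    exact ⟨hck, fun j hjk hj => hclt j hj hjk⟩
  have hdvd : k ∣ n - 1 := by
    rw [← horder]
    exact orderOf_dvd_of_pow_eq_one (ZMod.pow_card_sub_one_eq_one hcne)
  have hiter : ∀ a x : ZMod n, ∀ j : ℕ,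
      (ftrans n m a)^[j] x = a + c ^ j * (x - a) := by
    intro a x j
    induction j with
    | zero => simp
    | succ j ih =>
      rw [Function.iterate_succ_apply', ih]
      simp only [ftrans, hc, pow_succ]
      ring
  refine ⟨?_, hdvd, fun a => by unfold ftrans; ring⟩
  intro a x hxa
  have hper : Function.IsPeriodicPt (ftrans n m a) k x := by
    show (ftrans n m a)^[k] x = x
    rw [hiter, hck]; ring
  have hpd : Function.minimalPeriod (ftrans n m a) x ∣ k :=
    hper.minimalPeriod_dvd
  have hpos : 0 < Function.minimalPeriod (ftrans n m a) x :=
    hper.minimalPeriod_pos hk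
  rcases lt_or_eq_of_le (Nat.le_of_dvd hk hpd) with hlt | heq
  · exfalso
    have hmin := Function.iterate_minimalPeriod (f := ftrans n m a) (x := x)
    rw [hiter] at hmin
    have hx : x - a ≠ 0 := sub_ne_zero.mpr hxa
    have : c ^ Function.minimalPeriod (ftrans n m a) x = 1 := by
      have h3 : (c ^ Function.minimalPeriod (ftrans n m a) x - 1) * (x - a) = 0 := by
        linear_combination hmin
      rcases mul_eq_zero.mp h3 with h4 | h4
      · exact sub_eq_zero.mp h4
      · exact absurd h4 hx
    exact hclt _ hpos hlt this
  · exact heq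
end
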